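/- (Local data for manifolds) If G is a d-manifold (every unit sphere S(x) is a (d-1)-sphere), then for every x ∈ G and every m ≥ 1: w_m(U(x)) = (-1)^{dm}, w_m(S(x)) = 1 + (-1)^{d-1}, and w_m(B(x)) = (-1)^{d(m+1)}. -/

import Mathlib

/-!
Write `χ(A) = Σ_{y ∈ A} (-1)^{dim y}`. Expanding the indicator `[x_1 ∩ ... ∩ x_m ∈ A]` as
`χ` of the faces of the simplex `x_1 ∩ ... ∩ x_m` and exchanging the sums gives, for every
complex `A`, `w_m(A) = Σ_{z ∈ A} (-1)^{dim z} χ(U_A(z))^m`; the star `U(x)` is closed under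
intersection, so `w_m(U(x)) = χ(U(x))^m`. In a `d`-manifold the link of a simplex `z` is a
`(d - |z|)`-sphere, whence `χ(U(z)) = (-1)^d` for every `z`. Inside `B(x)` the star of
`z ∈ S(x)` is a cone (toggle a vertex of `x \ z`), so its `χ` vanishes, and
`U_{S(x)}(z) = U_{B(x)}(z) \ U(x ∪ z)` has `χ = -(-1)^d`. Together with
`χ(B(x)) = 1 = χ(U(x)) + χ(S(x))` this yields the three values.
-/

open Finset

variable {α : Type*} [DecidableEq α]

/-- The star `U(x) = {y ∈ G : x ⊆ y}` of a simplex `x` in the complex `G`. -/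
def starC (G : Finset (Finset α)) (x : Finset α) : Finset (Finset α) :=
  G.filter (fun y => x ⊆ y)

/-- The unit ball `B(x)`: the closure of the star `U(x)`. -/
def ballC (G : Finset (Finset α)) (x : Finset α) : Finset (Finset α) :=
  G.filter (fun z => ∃ y ∈ G, x ⊆ y ∧ z ⊆ y)

/-- The unit sphere `S(x) = B(x) \ U(x)`. -/
def sphereC (G : Finset (Finset α)) (x : Finset α) : Finset (Finset α) :=
  ballC G x \ starC G x

/-- `G` is a finite abstract simplicial complex: a finite set of nonempty finite sets
closed under taking nonempty subsets. -/
def IsComplex (G : Finset (Finset α)) : Prop :=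
  (∀ x ∈ G, x.Nonempty) ∧ ∀ x ∈ G, ∀ y, y ⊆ x → y.Nonempty → y ∈ G

/-- The intersection `x_1 ∩ ... ∩ x_m` of a tuple of finite sets (for `m ≥ 1`). -/
def interTuple {m : ℕ} (X : Fin m → Finset α) : Finset α :=
  (Finset.univ.sup X).filter (fun v => ∀ j, v ∈ X j)

/-- The `m`-th characteristic `w_m(A)`. -/
def wm (m : ℕ) (A : Finset (Finset α)) : ℤ :=
  ∑ X ∈ Fintype.piFinset (fun _ : Fin m => A),
    if interTuple X ∈ A then ∏ j, (-1 : ℤ) ^ ((X j).card - 1) else 0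

/-- `U` is open in the star topology on `G`: a union of stars. -/
def SCOpen (G U : Finset (Finset α)) : Prop :=
  ∃ T ⊆ G, U = T.biUnion (fun x => starC G x)

/-- Contractibility, defined recursively: a one-point complex is contractible, and
`G` is contractible if there is a vertex `x ∈ G` such that the unit sphere `S(x)`
and `G` minus the star `U(x)` are both contractible. -/
inductive Contractible : Finset (Finset ℕ) → Prop where
  | point (v : ℕ) : Contractible {{v}}
  | step (G : Finset (Finset ℕ)) (x : Finset ℕ) (hx : x ∈ G) (hv : x.card = 1)
      (hS : Contractible (sphereC G x)) (hU : Contractible (G \ starC G x)) :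
      Contractible G

/-- `d`-spheres, defined recursively: the empty complex is the `(-1)`-sphere; a
nonempty complex `G` is a `d`-sphere if every vertex unit sphere is a
`(d-1)`-sphere (so `G` is a `d`-manifold) and removing some open star leaves a
contractible complex. -/
inductive IsSphere : ℤ → Finset (Finset ℕ) → Prop where
  | empty : IsSphere (-1) (∅ : Finset (Finset ℕ))
  | succ (d : ℤ) (G : Finset (Finset ℕ)) (hne : G.Nonempty)
      (hmani : ∀ x ∈ G, x.card = 1 → IsSphere (d - 1) (sphereC G x))
      (hcon : ∃ x ∈ G, x.card = 1 ∧ Contractible (G \ starC G x)) :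
      IsSphere d G

def eulerChar (A : Finset (Finset α)) : ℤ := ∑ y ∈ A, (-1) ^ (y.card - 1)

def linkC (G : Finset (Finset α)) (z : Finset α) : Finset (Finset α) :=
  G.filter (fun u => Disjoint u z ∧ u ∪ z ∈ G)

def IsManifoldC (k : ℤ) (K : Finset (Finset ℕ)) : Prop :=
  ∀ x ∈ K, x.card = 1 → IsSphere (k - 1) (sphereC K x)

section Complexes

variable {G : Finset (Finset α)} {x y z u : Finset α}

lemma mem_starC : y ∈ starC G x ↔ y ∈ G ∧ x ⊆ y := mem_filter

lemma mem_ballC : z ∈ ballC G x ↔ z ∈ G ∧ ∃ y ∈ G, x ⊆ y ∧ z ⊆ y := mem_filter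

lemma mem_sphereC : z ∈ sphereC G x ↔ z ∈ ballC G x ∧ ¬ x ⊆ z := by
  simp only [sphereC, mem_sdiff, mem_starC, mem_ballC]
  tauto

lemma mem_linkC : u ∈ linkC G z ↔ u ∈ G ∧ Disjoint u z ∧ u ∪ z ∈ G := mem_filter

lemma starC_subset : starC G x ⊆ G := filter_subset _ _

lemma starC_subset_ballC : starC G x ⊆ ballC G x := fun y hy =>
  mem_ballC.2 ⟨(mem_starC.1 hy).1, y, (mem_starC.1 hy).1, (mem_starC.1 hy).2, subset_rfl⟩

lemma IsComplex.union_mem_of_mem_ballC (hG : IsComplex G) (hx : x ∈ G)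
    (hz : z ∈ ballC G x) : x ∪ z ∈ G := by
  obtain ⟨-, w, hw, hxw, hzw⟩ := mem_ballC.1 hz
  exact hG.2 _ hw _ (union_subset hxw hzw) ((hG.1 _ hx).mono subset_union_left)

lemma IsComplex.ballC (hG : IsComplex G) (x : Finset α) : IsComplex (ballC G x) := by
  refine ⟨fun y hy => hG.1 _ (mem_ballC.1 hy).1, fun y hy z hzy hz => ?_⟩
  obtain ⟨hyG, w, hw, hxw, hyw⟩ := mem_ballC.1 hy
  exact mem_ballC.2 ⟨hG.2 _ hyG _ hzy hz, w, hw, hxw, hzy.trans hyw⟩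

lemma IsComplex.sphereC (hG : IsComplex G) (x : Finset α) : IsComplex (sphereC G x) := by
  refine ⟨fun y hy => hG.1 _ (mem_ballC.1 (mem_sphereC.1 hy).1).1,
    fun y hy z hzy hz => ?_⟩
  obtain ⟨hyB, hxy⟩ := mem_sphereC.1 hy
  exact mem_sphereC.2 ⟨(hG.ballC x).2 _ hyB _ hzy hz, fun hxz => hxy (hxz.trans hzy)⟩

lemma IsComplex.sdiff_starC (hG : IsComplex G) (x : Finset α) : IsComplex (G \ starC G x) := by
  refine ⟨fun y hy => hG.1 _ (mem_sdiff.1 hy).1, fun y hy z hzy hz => ?_⟩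
  obtain ⟨hyG, hyU⟩ := mem_sdiff.1 hy
  refine mem_sdiff.2 ⟨hG.2 _ hyG _ hzy hz, fun hzU => hyU ?_⟩
  exact mem_starC.2 ⟨hyG, (mem_starC.1 hzU).2.trans hzy⟩

lemma IsComplex.linkC (hG : IsComplex G) (z : Finset α) : IsComplex (linkC G z) := by
  refine ⟨fun u hu => hG.1 _ (mem_linkC.1 hu).1, fun u hu w hwu hw => ?_⟩
  obtain ⟨huG, hdisj, huz⟩ := mem_linkC.1 hu
  exact mem_linkC.2 ⟨hG.2 _ huG _ hwu hw, hdisj.mono_left hwu,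
    hG.2 _ huz _ (union_subset_union hwu subset_rfl) (hw.mono subset_union_left)⟩

lemma sphereC_singleton_eq_linkC (hG : IsComplex G) (v : α) :
    sphereC G {v} = linkC G {v} := by
  ext u
  simp only [mem_sphereC, mem_ballC, mem_linkC, singleton_subset_iff, disjoint_singleton_right]
  constructor
  · rintro ⟨⟨huG, y, hy, hvy, huy⟩, hvu⟩
    exact ⟨huG, hvu, hG.2 _ hy _ (union_subset huy (singleton_subset_iff.2 hvy))
      ((hG.1 _ huG).mono subset_union_left)⟩
  · rintro ⟨huG, hvu, hun⟩
    exact ⟨⟨huG, u ∪ {v}, hun, by simp, subset_union_left⟩, hvu⟩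

lemma linkC_linkC (hG : IsComplex G) {a b : Finset α} (hab : Disjoint a b) :
    linkC (linkC G a) b = linkC G (a ∪ b) := by
  ext u
  simp only [mem_linkC, disjoint_union_left, disjoint_union_right]
  constructor
  · rintro ⟨⟨huG, hua, -⟩, hub, ⟨-, -, huba⟩⟩
    exact ⟨huG, ⟨hua, hub⟩, by rwa [union_right_comm, union_assoc] at huba⟩
  · rintro ⟨huG, ⟨hua, hub⟩, huab⟩
    have hface : ∀ s ⊆ u ∪ (a ∪ b), u ⊆ s → s ∈ G := fun s hs hus =>
      hG.2 _ huab _ hs ((hG.1 _ huG).mono hus)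
    refine ⟨⟨huG, hua, ?_⟩, hub, ?_, ⟨hua, hab.symm⟩,
      by rwa [union_right_comm, union_assoc]⟩
    · exact hface _ (union_subset_union_right subset_union_left) subset_union_left
    · exact hface _ (union_subset_union_right subset_union_right) subset_union_left

end Complexes

section EulerChar

variable {A B K : Finset (Finset α)} {x z : Finset α}

lemma neg_one_pow_sub_one {n : ℕ} (hn : n ≠ 0) : (-1 : ℤ) ^ (n - 1) = -(-1) ^ n := by
  rw [← mul_pow_sub_one hn, neg_one_mul, neg_neg]

lemma eulerChar_eq_neg_sum {β : Type*} {A : Finset (Finset β)} (hA : ∀ y ∈ A, y.Nonempty) :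
    eulerChar A = -∑ y ∈ A, (-1 : ℤ) ^ y.card := by
  rw [eulerChar, ← sum_neg_distrib]
  exact sum_congr rfl fun y hy => neg_one_pow_sub_one (hA y hy).card_pos.ne'

lemma eulerChar_sdiff_add (h : B ⊆ A) : eulerChar (A \ B) + eulerChar B = eulerChar A :=
  sum_sdiff h

lemma sum_neg_one_pow_card_eq_zero (v : α)
    (hA : ∀ y ∈ A, insert v y ∈ A ∧ y.erase v ∈ A) :
    ∑ y ∈ A, (-1 : ℤ) ^ y.card = 0 := by
  refine sum_involution (fun y _ => if v ∈ y then y.erase v else insert v y) ?_ ?_ ?_ ?_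
  · intro y _
    split_ifs with hv
    · rw [← card_erase_add_one hv, pow_succ]; ring
    · rw [card_insert_of_notMem hv, pow_succ]; ring
  · intro y _ _
    split_ifs with hv
    · exact fun h => notMem_erase v y (by rwa [h])
    · exact fun h => hv (h ▸ mem_insert_self v y)
  · intro y hy
    split_ifs
    exacts [(hA y hy).2, (hA y hy).1]
  · intro y _
    by_cases hv : v ∈ y <;> simp [hv]

lemma eulerChar_ballC (hK : IsComplex K) (hx : x ∈ K) : eulerChar (ballC K x) = 1 := by
  obtain ⟨v, hv⟩ := hK.1 x hx
  have hB := hK.ballC x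
  have hcone : ∑ y ∈ insert ∅ (ballC K x), (-1 : ℤ) ^ y.card = 0 := by
    refine sum_neg_one_pow_card_eq_zero v fun y hy => ?_
    obtain ⟨w, hw, hxw, hyw⟩ : ∃ w ∈ K, x ⊆ w ∧ y ⊆ w := by
      rcases mem_insert.1 hy with rfl | hy
      · exact ⟨x, hx, subset_rfl, empty_subset x⟩
      · exact (mem_ballC.1 hy).2
    have hface : ∀ s ⊆ w, s ∈ insert ∅ (ballC K x) := fun s hs =>
      mem_insert.2 <| s.eq_empty_or_nonempty.imp_right fun hs' =>
        mem_ballC.2 ⟨hK.2 _ hw _ hs hs', w, hw, hxw, hs⟩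
    exact ⟨hface _ (insert_subset (hxw hv) hyw), hface _ ((erase_subset v y).trans hyw)⟩
  rw [sum_insert fun h => not_nonempty_empty (hB.1 _ h), card_empty, pow_zero] at hcone
  rw [eulerChar_eq_neg_sum hB.1]
  linarith

lemma eulerChar_starC_add_eulerChar_sphereC (hK : IsComplex K) (hx : x ∈ K) :
    eulerChar (starC K x) + eulerChar (sphereC K x) = 1 := by
  rw [← eulerChar_ballC hK hx, add_comm]
  exact eulerChar_sdiff_add starC_subset_ballC

/-- `U(z)` is a cone over the link of `z`, with the simplex `z` as apex. -/
lemma eulerChar_starC_eq_neg_one_pow_mul (hK : IsComplex K) (hz : z ∈ K) :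
    eulerChar (starC K z) = (-1) ^ (z.card - 1) * (1 - eulerChar (linkC K z)) := by
  have hL := hK.linkC z
  have hdisj : ∀ u ∈ insert ∅ (linkC K z), Disjoint u z := by
    simp only [mem_insert, forall_eq_or_imp, disjoint_empty_left, true_and]
    exact fun u hu => (mem_linkC.1 hu).2.1
  have himage : starC K z = (insert ∅ (linkC K z)).image (· ∪ z) := by
    ext y
    simp only [mem_starC, mem_image]
    constructor
    · rintro ⟨hy, hzy⟩
      refine ⟨y \ z, mem_insert.2 ?_, sdiff_union_of_subset hzy⟩
      refine (y \ z).eq_empty_or_nonempty.imp_right fun hne => mem_linkC.2 ?_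
      exact ⟨hK.2 _ hy _ sdiff_subset hne, sdiff_disjoint, by rwa [sdiff_union_of_subset hzy]⟩
    · rintro ⟨u, hu, rfl⟩
      refine ⟨?_, subset_union_right⟩
      rcases mem_insert.1 hu with rfl | hu
      · rwa [empty_union]
      · exact (mem_linkC.1 hu).2.2
  have hinj : Set.InjOn (· ∪ z) (insert ∅ (linkC K z) : Finset (Finset α)) :=
    fun u hu u' hu' => disjoint_injOn_union_left z (hdisj u hu).symm (hdisj u' hu').symm
  have hterm : ∀ u ∈ insert ∅ (linkC K z),
      (-1 : ℤ) ^ ((u ∪ z).card - 1) = (-1) ^ (z.card - 1) * (-1) ^ u.card := by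
    intro u hu
    rw [card_union_of_disjoint (hdisj u hu), ← pow_add, add_comm,
      Nat.sub_add_comm (hK.1 z hz).card_pos]
  rw [eulerChar, himage, sum_image hinj, sum_congr rfl hterm, ← mul_sum,
    sum_insert fun h => not_nonempty_empty (hL.1 _ h), eulerChar_eq_neg_sum hL.1]
  simp

lemma Contractible.eulerChar_eq_one {K : Finset (Finset ℕ)} (h : Contractible K)
    (hK : IsComplex K) : eulerChar K = 1 := by
  induction h with
  | point v => simp [eulerChar]
  | step G x hx _ _ _ ihS ihU =>
    rw [← eulerChar_sdiff_add starC_subset, ihU (hK.sdiff_starC x)]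
    linarith [eulerChar_starC_add_eulerChar_sphereC hK hx, ihS (hK.sphereC x)]

lemma IsSphere.eulerChar_eq {k : ℤ} {K : Finset (Finset ℕ)} (h : IsSphere k K)
    (hK : IsComplex K) : eulerChar K = 1 + k.negOnePow := by
  induction h with
  | empty => simp [eulerChar]
  | succ d G _ _ hcon ih =>
    obtain ⟨x, hx, hv, hcontr⟩ := hcon
    rw [← eulerChar_sdiff_add starC_subset, hcontr.eulerChar_eq_one (hK.sdiff_starC x)]
    have hS := ih x hx hv (hK.sphereC x)
    rw [Int.negOnePow_sub, Int.negOnePow_one] at hS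
    push_cast at hS
    linarith [eulerChar_starC_add_eulerChar_sphereC hK hx]

end EulerChar

section Manifolds

variable {K : Finset (Finset ℕ)} {k : ℤ} {x z : Finset ℕ}

lemma IsSphere.isManifoldC (h : IsSphere k K) : IsManifoldC k K := by
  cases h with
  | empty => simp [IsManifoldC]
  | succ _ _ _ hmani _ => exact hmani

lemma IsManifoldC.isSphere_linkC (hK : IsComplex K) (hM : IsManifoldC k K) (hz : z ∈ K) :
    IsSphere (k - z.card) (linkC K z) := by
  induction z using Finset.induction_on with
  | empty => exact absurd (hK.1 ∅ hz) not_nonempty_empty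
  | insert v z hvz ih =>
    rcases z.eq_empty_or_nonempty with rfl | hzne
    · simpa [sphereC_singleton_eq_linkC hK] using hM {v} hz (card_singleton v)
    have hvL : {v} ∈ linkC K z := mem_linkC.2 ⟨hK.2 _ hz _ (by simp) (singleton_nonempty v),
      disjoint_singleton_left.2 hvz, by rwa [← insert_eq]⟩
    have h := (ih (hK.2 _ hz _ (subset_insert v z) hzne)).isManifoldC {v} hvL (card_singleton v)
    rw [sphereC_singleton_eq_linkC (hK.linkC z), linkC_linkC hK (disjoint_singleton_right.2 hvz),
      union_singleton] at h
    rw [card_insert_of_notMem hvz, Nat.cast_succ, ← sub_sub]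
    exact h

lemma IsManifoldC.eulerChar_starC (hK : IsComplex K) (hM : IsManifoldC k K) (hz : z ∈ K) :
    eulerChar (starC K z) = k.negOnePow := by
  have hsign : k.negOnePow = (k - z.card).negOnePow * (z.card : ℤ).negOnePow := by
    rw [← Int.negOnePow_add, sub_add_cancel]
  rw [eulerChar_starC_eq_neg_one_pow_mul hK hz, (hM.isSphere_linkC hK hz).eulerChar_eq (hK.linkC z),
    neg_one_pow_sub_one (hK.1 z hz).card_pos.ne', hsign]
  push_cast [Int.coe_negOnePow_natCast]
  ring

end Manifolds

section Characteristic

variable {m : ℕ} {A : Finset (Finset α)}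

lemma interTuple_subset (X : Fin m → Finset α) (j : Fin m) : interTuple X ⊆ X j :=
  fun _ hv => (mem_filter.1 hv).2 j

lemma subset_interTuple_iff (hm : 1 ≤ m) {X : Fin m → Finset α} {z : Finset α} :
    z ⊆ interTuple X ↔ ∀ j, z ⊆ X j := by
  refine ⟨fun h j => h.trans (interTuple_subset X j),
    fun h v hv => mem_filter.2 ⟨?_, fun j => h j hv⟩⟩
  exact le_sup (f := X) (mem_univ ⟨0, hm⟩) (h ⟨0, hm⟩ hv)

lemma sum_piFinset_prod_neg_one_pow {β : Type*} (A : Finset (Finset β)) :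
    ∑ X ∈ Fintype.piFinset (fun _ : Fin m => A), ∏ j, (-1 : ℤ) ^ ((X j).card - 1)
      = eulerChar A ^ m := by
  rw [sum_prod_piFinset A fun _ y => (-1 : ℤ) ^ (y.card - 1)]
  simp [eulerChar]

lemma wm_eq_eulerChar_pow
    (h : ∀ X ∈ Fintype.piFinset (fun _ : Fin m => A), interTuple X ∈ A) :
    wm m A = eulerChar A ^ m := by
  rw [wm, sum_congr rfl fun X hX => if_pos (h X hX), sum_piFinset_prod_neg_one_pow]

lemma wm_starC {K : Finset (Finset α)} {x : Finset α} (hK : IsComplex K) (hx : x ∈ K)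
    (hm : 1 ≤ m) : wm m (starC K x) = eulerChar (starC K x) ^ m := by
  refine wm_eq_eulerChar_pow fun X hX => ?_
  have hXU : ∀ j, X j ∈ starC K x := Fintype.mem_piFinset.1 hX
  have hxX : x ⊆ interTuple X := (subset_interTuple_iff hm).2 fun j => (mem_starC.1 (hXU j)).2
  exact mem_starC.2 ⟨hK.2 _ (mem_starC.1 (hXU ⟨0, hm⟩)).1 _ (interTuple_subset X _)
    ((hK.1 x hx).mono hxX), hxX⟩

lemma eulerChar_filter_subset (hA : IsComplex A) {y : Finset α} (hy : y ∈ A) :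
    eulerChar {z ∈ A | z ⊆ y} = 1 := by
  have hfaces : {z ∈ A | z ⊆ y} = y.powerset.erase ∅ := by
    ext z
    simp only [mem_filter, mem_erase, mem_powerset, ← nonempty_iff_ne_empty]
    exact ⟨fun ⟨hz, hzy⟩ => ⟨hA.1 z hz, hzy⟩,
      fun ⟨hne, hzy⟩ => ⟨hA.2 y hy z hzy hne, hzy⟩⟩
  have hsum := sum_powerset_neg_one_pow_card_of_nonempty (hA.1 y hy)
  rw [← add_sum_erase _ _ (empty_mem_powerset y), card_empty, pow_zero] at hsum
  rw [hfaces, eulerChar_eq_neg_sum fun z hz => nonempty_iff_ne_empty.2 (ne_of_mem_erase hz)]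
  linarith

lemma wm_eq_sum_eulerChar_starC (hA : IsComplex A) (hm : 1 ≤ m) :
    wm m A = ∑ z ∈ A, (-1) ^ (z.card - 1) * eulerChar (starC A z) ^ m := by
  have hindicator : ∀ X ∈ Fintype.piFinset (fun _ : Fin m => A),
      (if interTuple X ∈ A then ∏ j, (-1 : ℤ) ^ ((X j).card - 1) else 0)
        = ∑ z ∈ A, if z ⊆ interTuple X then
            (-1) ^ (z.card - 1) * ∏ j, (-1 : ℤ) ^ ((X j).card - 1) else 0 := by
    intro X hX
    rw [← sum_filter, ← sum_mul]
    split_ifs with hI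
    · rw [← eulerChar, eulerChar_filter_subset hA hI, one_mul]
    · have hX0 : X ⟨0, hm⟩ ∈ A := Fintype.mem_piFinset.1 hX _
      rw [filter_false_of_mem fun z hz hzI =>
        hI (hA.2 _ hX0 _ (interTuple_subset X _) ((hA.1 z hz).mono hzI)), sum_empty, zero_mul]
  rw [wm, sum_congr rfl hindicator, sum_comm]
  refine sum_congr rfl fun z hz => ?_
  have hstar : {X ∈ Fintype.piFinset (fun _ : Fin m => A) | z ⊆ interTuple X}
      = Fintype.piFinset (fun _ : Fin m => starC A z) := by
    ext X
    simp only [mem_filter, Fintype.mem_piFinset, subset_interTuple_iff hm, mem_starC]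
    exact ⟨fun h j => ⟨h.1 j, h.2 j⟩, fun h => ⟨fun j => (h j).1, fun j => (h j).2⟩⟩
  rw [← sum_filter, hstar, ← mul_sum, sum_piFinset_prod_neg_one_pow]

lemma wm_eq_eulerChar_mul_pow (hA : IsComplex A) (hm : 1 ≤ m) {c : ℤ}
    (hc : ∀ z ∈ A, eulerChar (starC A z) = c) : wm m A = eulerChar A * c ^ m := by
  rw [wm_eq_sum_eulerChar_starC hA hm, eulerChar, sum_mul]
  exact sum_congr rfl fun z hz => by rw [hc z hz]

end Characteristic

section LocalData

variable {K : Finset (Finset α)} {x z : Finset α}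

lemma starC_ballC_of_mem_starC (hz : z ∈ starC K x) : starC (ballC K x) z = starC K z := by
  ext y
  simp only [mem_starC, mem_ballC]
  exact ⟨fun ⟨⟨hy, _⟩, hzy⟩ => ⟨hy, hzy⟩,
    fun ⟨hy, hzy⟩ => ⟨⟨hy, y, hy, (mem_starC.1 hz).2.trans hzy, subset_rfl⟩, hzy⟩⟩

lemma starC_union_subset_starC_ballC : starC K (x ∪ z) ⊆ starC (ballC K x) z := by
  intro y hy
  obtain ⟨hy, hxzy⟩ := mem_starC.1 hy
  rw [union_subset_iff] at hxzy
  exact mem_starC.2 ⟨mem_ballC.2 ⟨hy, y, hy, hxzy.1, subset_rfl⟩, hxzy.2⟩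

lemma starC_sphereC : starC (sphereC K x) z = starC (ballC K x) z \ starC K (x ∪ z) := by
  ext y
  simp only [mem_starC, mem_sdiff, mem_sphereC, union_subset_iff]
  exact ⟨fun ⟨⟨hyB, hxy⟩, hzy⟩ => ⟨⟨hyB, hzy⟩, fun h => hxy h.2.1⟩,
    fun ⟨⟨hyB, hzy⟩, h⟩ =>
      ⟨⟨hyB, fun hxy => h ⟨(mem_ballC.1 hyB).1, hxy, hzy⟩⟩, hzy⟩⟩

lemma eulerChar_starC_ballC_of_mem_sphereC (hK : IsComplex K) (hz : z ∈ sphereC K x) :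
    eulerChar (starC (ballC K x) z) = 0 := by
  obtain ⟨hzB, hxz⟩ := mem_sphereC.1 hz
  obtain ⟨v, hvx, hvz⟩ := not_subset.1 hxz
  have hzne : z.Nonempty := hK.1 z (mem_ballC.1 hzB).1
  rw [eulerChar_eq_neg_sum fun y hy => hzne.mono (mem_starC.1 hy).2,
    sum_neg_one_pow_card_eq_zero v, neg_zero]
  intro y hy
  obtain ⟨hyB, hzy⟩ := mem_starC.1 hy
  obtain ⟨-, w, hw, hxw, hyw⟩ := mem_ballC.1 hyB
  have hface : ∀ s ⊆ w, z ⊆ s → s ∈ starC (ballC K x) z := fun s hsw hzs =>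
    mem_starC.2 ⟨mem_ballC.2 ⟨hK.2 _ hw _ hsw (hzne.mono hzs), w, hw, hxw, hsw⟩, hzs⟩
  exact ⟨hface _ (insert_subset (hxw hvx) hyw) (hzy.trans (subset_insert v y)),
    hface _ ((erase_subset v y).trans hyw) (subset_erase.2 ⟨hzy, hvz⟩)⟩

end LocalData

namespace IsManifoldC

variable {K : Finset (Finset ℕ)} {k : ℤ} {x z : Finset ℕ} {m : ℕ}

lemma eulerChar_starC_sphereC (hK : IsComplex K) (hM : IsManifoldC k K) (hx : x ∈ K)
    (hz : z ∈ sphereC K x) : eulerChar (starC (sphereC K x) z) = -k.negOnePow := by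
  have h := eulerChar_sdiff_add (starC_union_subset_starC_ballC (K := K) (x := x) (z := z))
  rw [← starC_sphereC, eulerChar_starC_ballC_of_mem_sphereC hK hz,
    hM.eulerChar_starC hK (hK.union_mem_of_mem_ballC hx (mem_sphereC.1 hz).1)] at h
  linarith

lemma wm_sphereC (hK : IsComplex K) (hM : IsManifoldC k K) (hx : x ∈ K) (hm : 1 ≤ m) :
    wm m (sphereC K x) = (1 - k.negOnePow) * (-k.negOnePow) ^ m := by
  rw [wm_eq_eulerChar_mul_pow (hK.sphereC x) hm fun z hz => hM.eulerChar_starC_sphereC hK hx hz]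
  congr 1
  linarith [eulerChar_starC_add_eulerChar_sphereC hK hx, hM.eulerChar_starC hK hx]

lemma wm_ballC (hK : IsComplex K) (hM : IsManifoldC k K) (hx : x ∈ K) (hm : 1 ≤ m) :
    wm m (ballC K x) = k.negOnePow ^ (m + 1) := by
  have hsphere : ∀ z ∈ sphereC K x, eulerChar (starC (ballC K x) z) ^ m = 0 := fun z hz => by
    rw [eulerChar_starC_ballC_of_mem_sphereC hK hz, zero_pow (by omega)]
  have hstar : ∀ z ∈ starC K x, eulerChar (starC (ballC K x) z) = k.negOnePow := fun z hz => by
    rw [starC_ballC_of_mem_starC hz, hM.eulerChar_starC hK (mem_starC.1 hz).1]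
  rw [wm_eq_sum_eulerChar_starC (hK.ballC x) hm, ← sum_sdiff starC_subset_ballC,
    sum_eq_zero fun z hz => by rw [hsphere z hz, mul_zero], zero_add,
    sum_congr rfl fun z hz => by rw [hstar z hz], ← sum_mul, ← eulerChar,
    hM.eulerChar_starC hK hx, pow_succ']

end IsManifoldC

/-- Local data in the manifold case: if `G` is a `d`-manifold (every vertex unit
sphere is a `(d-1)`-sphere), then for every `x ∈ G` and every `m ≥ 1`:
`w_m(U(x)) = (-1)^{dm}`, `w_m(S(x)) = 1 + (-1)^{d-1} = 1 - (-1)^d`, and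
`w_m(B(x)) = (-1)^{d(m+1)}`. -/
theorem manifold_local_data (G : Finset (Finset ℕ)) (hG : IsComplex G) (d : ℕ)
    (hmani : ∀ x ∈ G, x.card = 1 → IsSphere ((d : ℤ) - 1) (sphereC G x))
    (x : Finset ℕ) (hx : x ∈ G) (m : ℕ) (hm : 1 ≤ m) :
    wm m (starC G x) = (-1 : ℤ) ^ (d * m) ∧
    wm m (sphereC G x) = 1 - (-1 : ℤ) ^ d ∧
    wm m (ballC G x) = (-1 : ℤ) ^ (d * (m + 1)) := by
  have hM : IsManifoldC d G := hmani
  have hsign : (((d : ℤ).negOnePow : ℤˣ) : ℤ) = (-1) ^ d := Int.coe_negOnePow_natCast d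
  refine ⟨?_, ?_, ?_⟩
  · rw [wm_starC hG hx hm, hM.eulerChar_starC hG hx, hsign, pow_mul]
  · rw [hM.wm_sphereC hG hx hm, hsign]
    rcases Nat.even_or_odd d with hd | hd <;> simp [hd.neg_one_pow]
  · rw [hM.wm_ballC hG hx hm, hsign, pow_mul]
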